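/- arXiv:2106.06885 — 5 statements merged into one kernel-verified Lean document; each statement's English description precedes it below -/
import Mathlib

section
/- For any g ∈ ℝ^d, λ > 0, c > 0, b > 0, and any norm ‖·‖ on ℝ^d with dual norm ‖·‖_*, the supremum of ⟨g,v⟩ - (λ/2)‖v‖^2 over all v with ‖v‖ ≤ min(c/λ, b) equals (1/λ)·min(‖g‖_*, c, bλ)·(‖g‖_* - (1/2)min(‖g‖_*, c, bλ)). -/
private lemma N_sum_le' {d : ℕ} {N : (Fin d → ℝ) → ℝ} (hN0 : N 0 = 0)
    (hN_tri : ∀ v w, N (v + w) ≤ N v + N w) {ι : Type*} (s : Finset ι)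
    (f : ι → Fin d → ℝ) : N (∑ i ∈ s, f i) ≤ ∑ i ∈ s, N (f i) := by
  classical
  induction s using Finset.cons_induction with
  | empty => simp [hN0]
  | cons a s ha ih =>
      simp only [Finset.sum_cons]
      exact le_trans (hN_tri _ _) (by linarith)

private lemma quad_max (lam Nstar r₀ t : ℝ) (hlam : 0 < lam) (h0 : 0 ≤ t) (h1 : t ≤ r₀) :
    Nstar * t - lam / 2 * t ^ 2 ≤
      min (Nstar / lam) r₀ * Nstar - lam / 2 * (min (Nstar / lam) r₀) ^ 2 := by
  rcases min_cases (Nstar / lam) r₀ with ⟨heq, hle⟩ | ⟨heq, hle⟩ <;> rw [heq]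
  · have h2 : Nstar / lam * lam = Nstar := by field_simp
    nlinarith [sq_nonneg (Nstar / lam - t), hlam, h2]
  · have h2 : r₀ * lam ≤ Nstar := by
      rw [← le_div_iff₀ hlam]; exact hle.le
    nlinarith [sq_nonneg (r₀ - t), h2, hlam,
      mul_nonneg (sub_nonneg.2 h1) (by linarith : (0:ℝ) ≤ Nstar - r₀ * lam)]

set_option maxHeartbeats 1000000 in
/-- Norm-constrained conjugate, exact value. -/
theorem norm_constrained_conjugate_eq (d : ℕ) (N : (Fin d → ℝ) → ℝ)
    (hN_nonneg : ∀ v, 0 ≤ N v)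
    (hN_homog : ∀ (a : ℝ) (v : Fin d → ℝ), N (a • v) = |a| * N v)
    (hN_tri : ∀ v w, N (v + w) ≤ N v + N w)
    (hN_def : ∀ v, N v = 0 → v = 0)
    (g : Fin d → ℝ) (lam c b : ℝ) (hlam : 0 < lam) (hc : 0 < c) (hb : 0 < b)
    (Nstar : ℝ)
    (hNstar : Nstar = sSup {x : ℝ | ∃ v : Fin d → ℝ, N v ≤ 1 ∧ x = ∑ i, g i * v i}) :
    sSup {x : ℝ | ∃ v : Fin d → ℝ, N v ≤ min (c / lam) b ∧
        x = (∑ i, g i * v i) - lam / 2 * (N v)^2}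
      = (1 / lam) * min (min Nstar c) (b * lam) *
          (Nstar - (1/2) * min (min Nstar c) (b * lam)) := by
  classical
  have hN0 : N 0 = 0 := by
    have := hN_homog 0 0
    simpa using this
  -- N is dominated by a multiple of the sup norm
  set C : ℝ := ∑ i : Fin d, N (Pi.single i 1) with hCdef
  have hC_nonneg : 0 ≤ C := Finset.sum_nonneg fun i _ => hN_nonneg _
  have hNle : ∀ v : Fin d → ℝ, N v ≤ C * ‖v‖ := by
    intro v
    have hv : v = ∑ i : Fin d, (v i) • (Pi.single i (1:ℝ) : Fin d → ℝ) := by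
      conv_lhs => rw [← Finset.univ_sum_single v]
      congr 1
      funext i
      rw [← Pi.single_smul, smul_eq_mul, mul_one]
    calc N v ≤ ∑ i : Fin d, N ((v i) • (Pi.single i (1:ℝ) : Fin d → ℝ)) := by
            conv_lhs => rw [hv]
            exact N_sum_le' hN0 hN_tri _ _
      _ = ∑ i : Fin d, |v i| * N (Pi.single i 1) := by
            simp [hN_homog]
      _ ≤ ∑ i : Fin d, ‖v‖ * N (Pi.single i 1) := by
            apply Finset.sum_le_sum
            intro i _
            exact mul_le_mul_of_nonneg_right
              (by simpa using norm_le_pi_norm v i) (hN_nonneg _)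
      _ = C * ‖v‖ := by rw [← Finset.mul_sum, mul_comm]
  -- N is continuous
  have hNcont : Continuous N := by
    have hlip : LipschitzWith C.toNNReal N := by
      apply LipschitzWith.of_dist_le_mul
      intro v w
      have h1 : N v - N w ≤ N (v - w) := by
        have := hN_tri (v - w) w
        simp at this
        linarith
      have h2 : N w - N v ≤ N (v - w) := by
        have := hN_tri (w - v) v
        simp at this
        have hsym : N (w - v) = N (v - w) := by
          have : w - v = (-1 : ℝ) • (v - w) := by simp
          rw [this, hN_homog]
          simp
        linarith
      have : |N v - N w| ≤ N (v - w) := abs_sub_le_iff.2 ⟨h1, h2⟩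
      calc dist (N v) (N w) = |N v - N w| := Real.dist_eq _ _
        _ ≤ N (v - w) := this
        _ ≤ C * ‖v - w‖ := hNle _
        _ = C.toNNReal * dist v w := by
            rw [dist_eq_norm, Real.coe_toNNReal _ hC_nonneg]
    exact hlip.continuous
  -- N dominates a multiple of the sup norm
  obtain ⟨m, hm_pos, hm⟩ : ∃ m : ℝ, 0 < m ∧ ∀ v : Fin d → ℝ, m * ‖v‖ ≤ N v := by
    by_cases hd : ∃ v : Fin d → ℝ, v ≠ 0
    · obtain ⟨v, hv⟩ := hd
      have hvn : ‖v‖ ≠ 0 := norm_ne_zero_iff.2 hv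
      have hsphere_ne : (Metric.sphere (0 : Fin d → ℝ) 1).Nonempty := by
        refine ⟨‖v‖⁻¹ • v, ?_⟩
        simp [norm_smul, abs_of_nonneg (inv_nonneg.2 (norm_nonneg v)),
          inv_mul_cancel₀ hvn]
      obtain ⟨v₀, hv₀mem, hv₀min'⟩ :=
        (isCompact_sphere (0 : Fin d → ℝ) 1).exists_isMinOn hsphere_ne
          hNcont.continuousOn
      have hv₀min : ∀ y ∈ Metric.sphere (0 : Fin d → ℝ) 1, N v₀ ≤ N y :=
        fun y hy => hv₀min' hy
      have hv₀norm : ‖v₀‖ = 1 := by simpa using hv₀mem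
      have hv₀ne : v₀ ≠ 0 := by
        intro h
        rw [h] at hv₀norm
        simp at hv₀norm
      have hm_pos : 0 < N v₀ := by
        rcases lt_or_eq_of_le (hN_nonneg v₀) with h | h
        · exact h
        · exact absurd (hN_def v₀ h.symm) hv₀ne
      refine ⟨N v₀, hm_pos, fun w => ?_⟩
      by_cases hw : w = 0
      · simp [hw, hN0]
      · have hwn : (0:ℝ) < ‖w‖ := norm_pos_iff.2 hw
        have hmem : ‖w‖⁻¹ • w ∈ Metric.sphere (0 : Fin d → ℝ) 1 := by
          simp [norm_smul, abs_of_nonneg (inv_nonneg.2 (norm_nonneg w)),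
            inv_mul_cancel₀ hwn.ne']
        have := hv₀min _ hmem
        rw [hN_homog, abs_of_nonneg (inv_nonneg.2 (norm_nonneg w))] at this
        calc N v₀ * ‖w‖ ≤ (‖w‖⁻¹ * N w) * ‖w‖ :=
              mul_le_mul_of_nonneg_right this (norm_nonneg w)
          _ = N w := by field_simp
    · refine ⟨1, one_pos, fun w => ?_⟩
      push_neg at hd
      rw [hd w]
      simp [hN0]
  -- the dual set
  set D : Set ℝ := {x : ℝ | ∃ v : Fin d → ℝ, N v ≤ 1 ∧ x = ∑ i, g i * v i} with hDdef
  have hD_ne : D.Nonempty := ⟨0, 0, by simp [hN0]⟩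
  set K : ℝ := ∑ i : Fin d, |g i| with hKdef
  have hK_nonneg : 0 ≤ K := Finset.sum_nonneg fun i _ => abs_nonneg _
  have hgv : ∀ v : Fin d → ℝ, (∑ i, g i * v i) ≤ K * ‖v‖ := by
    intro v
    calc (∑ i, g i * v i) ≤ ∑ i, |g i| * ‖v‖ := by
          apply Finset.sum_le_sum
          intro i _
          calc g i * v i ≤ |g i * v i| := le_abs_self _
            _ = |g i| * |v i| := abs_mul _ _
            _ ≤ |g i| * ‖v‖ := mul_le_mul_of_nonneg_left
                (by simpa using norm_le_pi_norm v i) (abs_nonneg _)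
      _ = K * ‖v‖ := by rw [← Finset.sum_mul]
  have hD_bdd : BddAbove D := by
    refine ⟨K / m, fun x hx => ?_⟩
    obtain ⟨v, hv1, rfl⟩ := hx
    have h1 : m * ‖v‖ ≤ N v := hm v
    have h2 : ‖v‖ ≤ 1 / m := by
      rw [le_div_iff₀ hm_pos]
      linarith [h1.trans hv1]
    calc (∑ i, g i * v i) ≤ K * ‖v‖ := hgv v
      _ ≤ K * (1 / m) := mul_le_mul_of_nonneg_left h2 hK_nonneg
      _ = K / m := by ring
  have hNstar_nonneg : 0 ≤ Nstar := by
    rw [hNstar]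
    exact le_csSup hD_bdd ⟨0, by simp [hN0]⟩
  -- key duality bound
  have hkey : ∀ v : Fin d → ℝ, (∑ i, g i * v i) ≤ Nstar * N v := by
    intro v
    by_cases hv : N v = 0
    · rw [hN_def v hv]
      simp [hN0]
    · have hNv : 0 < N v := lt_of_le_of_ne (hN_nonneg v) (Ne.symm hv)
      have hmem : (∑ i, g i * ((N v)⁻¹ * v i)) ∈ D := by
        refine ⟨(N v)⁻¹ • v, ?_, by simp [smul_eq_mul]⟩
        rw [hN_homog, abs_of_nonneg (inv_nonneg.2 hNv.le), inv_mul_cancel₀ hv]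
      have hle : (∑ i, g i * ((N v)⁻¹ * v i)) ≤ Nstar := hNstar ▸ le_csSup hD_bdd hmem
      have heq : (∑ i, g i * ((N v)⁻¹ * v i)) = (N v)⁻¹ * ∑ i, g i * v i := by
        rw [Finset.mul_sum]
        congr 1; funext i; ring
      rw [heq] at hle
      calc (∑ i, g i * v i) = N v * ((N v)⁻¹ * ∑ i, g i * v i) := by
            field_simp
        _ ≤ N v * Nstar := mul_le_mul_of_nonneg_left hle hNv.le
        _ = Nstar * N v := mul_comm _ _
  -- radii
  set r₀ : ℝ := min (c / lam) b with hr₀def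
  have hr₀_pos : 0 < r₀ := lt_min (div_pos hc hlam) hb
  set r : ℝ := min (Nstar / lam) r₀ with hrdef
  have hr_nonneg : 0 ≤ r := le_min (div_nonneg hNstar_nonneg hlam.le) hr₀_pos.le
  have hr_le : r ≤ r₀ := min_le_right _ _
  have hlr : lam * r ≤ Nstar := by
    have : r ≤ Nstar / lam := min_le_left _ _
    rw [le_div_iff₀ hlam] at this
    linarith
  -- the min in the RHS equals lam * r
  have hmin_eq : min (min Nstar c) (b * lam) = lam * r := by
    rw [hrdef, hr₀def, mul_min_of_nonneg _ _ hlam.le, mul_min_of_nonneg _ _ hlam.le]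
    rw [mul_div_cancel₀ _ hlam.ne', mul_div_cancel₀ _ hlam.ne']
    rw [min_assoc, mul_comm lam b]
  -- target value
  have hRHS : (1 / lam) * min (min Nstar c) (b * lam) *
      (Nstar - (1/2) * min (min Nstar c) (b * lam))
        = r * Nstar - lam / 2 * r ^ 2 := by
    rw [hmin_eq]
    field_simp
  rw [hRHS]
  set S : Set ℝ := {x : ℝ | ∃ v : Fin d → ℝ, N v ≤ min (c / lam) b ∧
      x = (∑ i, g i * v i) - lam / 2 * (N v)^2} with hSdef
  have hS_ne : S.Nonempty :=
    ⟨(∑ i, g i * (0:Fin d → ℝ) i) - lam / 2 * (N 0)^2, 0, by simp [hN0, hr₀_pos.le, (div_pos hc hlam).le, hb.le], rfl⟩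
  -- upper bound: every element of S is ≤ T
  have hub : ∀ x ∈ S, x ≤ r * Nstar - lam / 2 * r ^ 2 := by
    rintro x ⟨v, hv, rfl⟩
    have ht0 : 0 ≤ N v := hN_nonneg v
    have ht1 : N v ≤ r₀ := hv
    have h1 : (∑ i, g i * v i) - lam / 2 * (N v)^2 ≤ Nstar * N v - lam / 2 * (N v)^2 := by
      linarith [hkey v]
    refine h1.trans ?_
    have h2 := quad_max lam Nstar r₀ (N v) hlam ht0 ht1
    rw [hrdef]
    linarith
  have hS_bdd : BddAbove S := ⟨r * Nstar - lam / 2 * r ^ 2, hub⟩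
  apply le_antisymm
  · exact csSup_le hS_ne hub
  · -- T ≤ sSup S
    apply le_of_forall_pos_le_add
    intro ε hε
    set δ : ℝ := ε / (r + 1) with hδdef
    have hδ_pos : 0 < δ := div_pos hε (by linarith)
    have hlt : Nstar - δ < sSup D := by
      rw [← hNstar]; linarith
    obtain ⟨x, hxD, hxgt⟩ := exists_lt_of_lt_csSup hD_ne hlt
    obtain ⟨v, hv1, rfl⟩ := hxD
    -- the scaled vector
    have hmemS : (∑ i, g i * (r * v i)) - lam / 2 * (N (r • v))^2 ∈ S := by
      refine ⟨r • v, ?_, by simp [smul_eq_mul]⟩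
      rw [hN_homog, abs_of_nonneg hr_nonneg]
      have h1 : r * N v ≤ r := by nlinarith
      exact h1.trans hr_le
    have hel : (r * Nstar - lam / 2 * r ^ 2) - ε ≤ (∑ i, g i * (r * v i)) - lam / 2 * (N (r • v))^2 := by
      have hsum : (∑ i, g i * (r * v i)) = r * ∑ i, g i * v i := by
        rw [Finset.mul_sum]; congr 1; funext i; ring
      have hNsq : (N (r • v))^2 ≤ r^2 := by
        rw [hN_homog, abs_of_nonneg hr_nonneg]
        have h1 : 0 ≤ r * N v := mul_nonneg hr_nonneg (hN_nonneg v)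
        have h2 : r * N v ≤ r := by
          calc r * N v ≤ r * 1 := mul_le_mul_of_nonneg_left hv1 hr_nonneg
            _ = r := mul_one r
        nlinarith
      have h3 : r * (Nstar - δ) ≤ r * ∑ i, g i * v i :=
        mul_le_mul_of_nonneg_left hxgt.le hr_nonneg
      have h4 : r * δ ≤ ε := by
        have hδ' : (r + 1) * δ = ε := by
          rw [hδdef]; field_simp
        nlinarith [hδ_pos, hr_nonneg]
      rw [hsum]
      nlinarith [hlam]
    calc r * Nstar - lam / 2 * r ^ 2 ≤ (∑ i, g i * (r * v i)) - lam / 2 * (N (r • v))^2 + ε := by linarith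
      _ ≤ sSup S + ε := by linarith [le_csSup hS_bdd hmemS]
end

section
/- For any g ∈ ℝ^d, λ > 0, c > 0, b > 0, the supremum of ⟨g,v⟩ - (λ/2)‖v‖^2 over v with ‖v‖ ≤ min(c/λ, b) is at most min(b‖g‖_*, (1/(2λ))(‖g‖_*^2 - (‖g‖_* - c)_+^2)). -/
/-- Norm-constrained conjugate, upper bound. -/
theorem norm_constrained_conjugate_le (d : ℕ) (N : (Fin d → ℝ) → ℝ)
    (hN_nonneg : ∀ v, 0 ≤ N v)
    (hN_homog : ∀ (a : ℝ) (v : Fin d → ℝ), N (a • v) = |a| * N v)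
    (hN_tri : ∀ v w, N (v + w) ≤ N v + N w)
    (hN_def : ∀ v, N v = 0 → v = 0)
    (g : Fin d → ℝ) (lam c b : ℝ) (hlam : 0 < lam) (hc : 0 < c) (hb : 0 < b)
    (Nstar : ℝ)
    (hNstar : Nstar = sSup {x : ℝ | ∃ v : Fin d → ℝ, N v ≤ 1 ∧ x = ∑ i, g i * v i}) :
    sSup {x : ℝ | ∃ v : Fin d → ℝ, N v ≤ min (c / lam) b ∧
        x = (∑ i, g i * v i) - lam / 2 * (N v)^2}
      ≤ min (b * Nstar) ((1 / (2 * lam)) * (Nstar^2 - (max (Nstar - c) 0)^2)) := by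
  have hN0 : N 0 = 0 := by simpa using hN_homog 0 0
  have hm : 0 < min (c / lam) b := lt_min (div_pos hc hlam) hb
  set D := {x : ℝ | ∃ v : Fin d → ℝ, N v ≤ 1 ∧ x = ∑ i, g i * v i} with hD
  set S := {x : ℝ | ∃ v : Fin d → ℝ, N v ≤ min (c / lam) b ∧
        x = (∑ i, g i * v i) - lam / 2 * (N v)^2} with hS
  by_cases hB : BddAbove D
  · have h0D : (0:ℝ) ∈ D := ⟨0, by simp [hN0]⟩
    have hNs0 : 0 ≤ Nstar := by rw [hNstar]; exact le_csSup hB h0D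
    have key : ∀ v : Fin d → ℝ, ∑ i, g i * v i ≤ Nstar * N v := by
      intro v
      rcases eq_or_lt_of_le (hN_nonneg v) with h | h
      · have hv0 : v = 0 := hN_def v h.symm
        simp [hv0, hN0]
      · have hmem : (N v)⁻¹ * ∑ i, g i * v i ∈ D := by
          refine ⟨(N v)⁻¹ • v, ?_, ?_⟩
          · rw [hN_homog, abs_of_nonneg (inv_nonneg.mpr h.le),
              inv_mul_cancel₀ h.ne']
          · rw [Finset.mul_sum]
            refine Finset.sum_congr rfl fun i _ => ?_
            simp [Pi.smul_apply]; ring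
        have hle : (N v)⁻¹ * ∑ i, g i * v i ≤ Nstar := by
          rw [hNstar]; exact le_csSup hB hmem
        calc ∑ i, g i * v i = N v * ((N v)⁻¹ * ∑ i, g i * v i) := by
              field_simp
          _ ≤ N v * Nstar := mul_le_mul_of_nonneg_left hle h.le
          _ = Nstar * N v := mul_comm _ _
    have hM0 : 0 ≤ max (Nstar - c) 0 := le_max_right _ _
    have hMle : max (Nstar - c) 0 ≤ Nstar := max_le (by linarith) hNs0
    have hRHS : 0 ≤ min (b * Nstar)
        ((1 / (2 * lam)) * (Nstar^2 - (max (Nstar - c) 0)^2)) := by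
      refine le_min (mul_nonneg hb.le hNs0) ?_
      have : (max (Nstar - c) 0)^2 ≤ Nstar^2 := by nlinarith
      have h2 : (0:ℝ) < 1 / (2 * lam) := by positivity
      nlinarith
    refine Real.sSup_le ?_ hRHS
    rintro x ⟨v, hv, rfl⟩
    have hs0 : 0 ≤ N v := hN_nonneg v
    have hsb : N v ≤ b := hv.trans (min_le_right _ _)
    have hsc : lam * N v ≤ c := by
      have h1 := hv.trans (min_le_left _ _)
      rw [le_div_iff₀ hlam] at h1
      linarith
    have hgv : ∑ i, g i * v i ≤ Nstar * N v := key v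
    refine le_min ?_ ?_
    · nlinarith [mul_le_mul_of_nonneg_left hsb hNs0, sq_nonneg (N v)]
    · rw [one_div, inv_mul_eq_div, le_div_iff₀ (by positivity : (0:ℝ) < 2 * lam)]
      rcases le_total Nstar c with h | h
      · rw [max_eq_right (by linarith)]
        nlinarith [sq_nonneg (Nstar - lam * N v)]
      · rw [max_eq_left (by linarith)]
        nlinarith [mul_nonneg (by linarith : (0:ℝ) ≤ c - lam * N v)
          (by linarith : (0:ℝ) ≤ 2 * Nstar - c - lam * N v)]
  · have hNs : Nstar = 0 := by rw [hNstar]; exact Real.sSup_of_not_bddAbove hB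
    have hSB : ¬ BddAbove S := by
      rintro ⟨K, hK⟩
      apply hB
      refine ⟨(K + lam / 2 * (min (c / lam) b)^2) / (min (c / lam) b), ?_⟩
      rintro x ⟨v, hv, rfl⟩
      set m := min (c / lam) b with hmdef
      have hmem : (∑ i, g i * (m • v) i) - lam / 2 * (N (m • v))^2 ∈ S := by
        refine ⟨m • v, ?_, rfl⟩
        rw [hN_homog, abs_of_pos hm]
        calc m * N v ≤ m * 1 := mul_le_mul_of_nonneg_left hv hm.le
          _ = m := mul_one m
      have hle := hK hmem
      have hNm : N (m • v) = m * N v := by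
        rw [hN_homog, abs_of_pos hm]
      have hsum : (∑ i, g i * (m • v) i) = m * ∑ i, g i * v i := by
        rw [Finset.mul_sum]
        refine Finset.sum_congr rfl fun i _ => ?_
        simp [Pi.smul_apply]; ring
      rw [hNm, hsum] at hle
      have hNv0 : 0 ≤ N v := hN_nonneg v
      have hsq : (m * N v)^2 ≤ m^2 := by nlinarith [mul_le_mul hv hv hNv0 zero_le_one, sq_nonneg m]
      rw [le_div_iff₀ hm]
      nlinarith
    rw [Real.sSup_of_not_bddAbove hSB, hNs]
    have : max ((0:ℝ) - c) 0 = 0 := max_eq_right (by linarith)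
    rw [this]
    norm_num
end

section
/- Fix α > 0 and nonnegative sequences (a_t), (b_t) for t = 1,…,T, a delay D ≥ 0, and a positive sequence (λ_t). Suppose for each t that α·λ_{t+1} ≥ 2·max_{j ≤ t-D-1} (a_{j-D+1} + … + a_j) + sqrt(∑_{i=1}^{t-D} (a_i² + 2αb_i)). Then ∑_{t=1}^T min(b_t/λ_t, a_t) ≤ α·λ_{T+D+1}. -/
open Finset in
private lemma dub_aux (D : ℕ) (α : ℝ) (hα : 0 < α) (a b lam : ℕ → ℝ)
    (ha : ∀ t, 0 ≤ a t) (hb : ∀ t, 0 ≤ b t) (ha0 : a 0 = 0)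
    (hlam : ∀ t, 0 < lam t)
    (hrec : ∀ t : ℕ,
      2 * (Finset.range (t - D - 1 + 1)).sup' ⟨0, Finset.mem_range.mpr (Nat.succ_pos _)⟩
            (fun j => ∑ i ∈ Finset.Icc (j + 1 - D) j, a i)
        + Real.sqrt (∑ i ∈ Finset.Icc 1 (t - D), (a i ^ 2 + 2 * α * b i))
        ≤ α * lam (t + 1)) :
    ∀ T : ℕ, ∑ t ∈ Finset.Ioc 0 T, min (b t / lam t) (a t) ≤ α * lam (T + D + 1) := by
  intro T
  induction T using Nat.strong_induction_on with
  | _ T IH =>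
  set m : ℕ → ℝ := fun t => min (b t / lam t) (a t) with hm
  have hm0 : ∀ t, 0 ≤ m t := fun t => le_min (div_nonneg (hb t) (hlam t).le) (ha t)
  have hma : ∀ t, m t ≤ a t := fun t => min_le_right _ _
  have hmb : ∀ t, m t * lam t ≤ b t := by
    intro t
    calc m t * lam t ≤ (b t / lam t) * lam t :=
          mul_le_mul_of_nonneg_right (min_le_left _ _) (hlam t).le
      _ = b t := div_mul_cancel₀ _ (hlam t).ne'
  rcases Nat.eq_zero_or_pos T with hT0 | hT
  · subst hT0
    simp only [Finset.Ioc_self, Finset.sum_empty]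
    exact (mul_pos hα (hlam _)).le
  -- rewrite hrec (T+D)
  have key := hrec (T + D)
  simp only [show T + D - D - 1 + 1 = T from by omega,
    show T + D - D = T from by omega, show T - 1 + 1 = T from by omega] at key
  obtain ⟨M, hMle, hMkey⟩ : ∃ M : ℝ,
      (∀ j ∈ Finset.range T, (∑ i ∈ Finset.Icc (j + 1 - D) j, a i) ≤ M) ∧
      2 * M + Real.sqrt (∑ i ∈ Finset.Icc 1 T, (a i ^ 2 + 2 * α * b i)) ≤ α * lam (T + D + 1) :=
    ⟨_, fun j hj => Finset.le_sup' (fun x => ∑ i ∈ Finset.Icc (x + 1 - D) x, a i) hj, key⟩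
  have hM0 : 0 ≤ M := by
    refine le_trans ?_ (hMle 0 (Finset.mem_range.mpr hT))
    exact Finset.sum_nonneg fun i _ => ha i
  -- square identity
  have hsq : ∀ n : ℕ, (∑ t ∈ Finset.Ioc 0 n, m t) ^ 2
      = ∑ t ∈ Finset.Ioc 0 n, (m t ^ 2 + 2 * m t * ∑ i ∈ Finset.Ioc 0 (t - 1), m i) := by
    intro n
    induction n with
    | zero => simp
    | succ n ih =>
      rw [Finset.sum_Ioc_succ_top (Nat.zero_le _), Finset.sum_Ioc_succ_top (Nat.zero_le _)]
      simp only [Nat.add_sub_cancel]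
      rw [← ih]; ring
  -- per-term bound
  have hstep : ∀ t ∈ Finset.Ioc 0 T,
      m t ^ 2 + 2 * m t * (∑ i ∈ Finset.Ioc 0 (t - 1), m i)
        ≤ a t ^ 2 + 2 * α * b t + 2 * M * m t := by
    intro t ht
    obtain ⟨ht1, htT⟩ := Finset.mem_Ioc.mp ht
    have hsplit : (∑ i ∈ Finset.Ioc 0 (t - 1), m i)
        ≤ (∑ i ∈ Finset.Ioc 0 (t - 1 - D), m i) + ∑ i ∈ Finset.Icc (t - 1 + 1 - D) (t - 1), a i := by
      rw [← Finset.sum_Ioc_consecutive m (Nat.zero_le (t - 1 - D)) (Nat.sub_le _ _)]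
      gcongr ?_ + ?_
      · exact le_refl _
      · calc (∑ i ∈ Finset.Ioc (t - 1 - D) (t - 1), m i)
            ≤ ∑ i ∈ Finset.Ioc (t - 1 - D) (t - 1), a i :=
              Finset.sum_le_sum fun i _ => hma i
          _ ≤ ∑ i ∈ Finset.Icc (t - 1 + 1 - D) (t - 1), a i := by
              refine Finset.sum_le_sum_of_subset_of_nonneg ?_ fun i _ _ => ha i
              intro x hx
              simp only [Finset.mem_Ioc, Finset.mem_Icc] at *
              omega
    have htail : (∑ i ∈ Finset.Ioc 0 (t - 1 - D), m i) ≤ α * lam t := by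
      rcases le_or_gt t (D + 1) with h | h
      · rw [show t - 1 - D = 0 from by omega]
        simp only [Finset.Ioc_self, Finset.sum_empty]
        exact (mul_pos hα (hlam _)).le
      · have := IH (t - 1 - D) (by omega)
        rwa [show t - 1 - D + D + 1 = t from by omega] at this
    have hA : (∑ i ∈ Finset.Icc (t - 1 + 1 - D) (t - 1), a i) ≤ M :=
      hMle (t - 1) (Finset.mem_range.mpr (by omega))
    have e1 : m t * (∑ i ∈ Finset.Ioc 0 (t - 1), m i) ≤ α * b t + m t * M := by
      calc m t * (∑ i ∈ Finset.Ioc 0 (t - 1), m i)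
          ≤ m t * ((∑ i ∈ Finset.Ioc 0 (t - 1 - D), m i)
              + ∑ i ∈ Finset.Icc (t - 1 + 1 - D) (t - 1), a i) :=
            mul_le_mul_of_nonneg_left hsplit (hm0 t)
        _ ≤ m t * (α * lam t + M) := by
            refine mul_le_mul_of_nonneg_left ?_ (hm0 t)
            exact add_le_add htail hA
        _ = α * (m t * lam t) + m t * M := by ring
        _ ≤ α * b t + m t * M := by
            have := mul_le_mul_of_nonneg_left (hmb t) hα.le
            linarith
    have e2 : m t ^ 2 ≤ a t ^ 2 := pow_le_pow_left₀ (hm0 t) (hma t) 2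
    nlinarith [e1, e2]
  -- sum up
  have hQ0 : 0 ≤ ∑ i ∈ Finset.Icc 1 T, (a i ^ 2 + 2 * α * b i) := by
    refine Finset.sum_nonneg fun i _ => ?_
    have := hb i
    nlinarith [sq_nonneg (a i)]
  have hs0 : 0 ≤ ∑ t ∈ Finset.Ioc 0 T, m t := Finset.sum_nonneg fun t _ => hm0 t
  have hIcc : Finset.Icc 1 T = Finset.Ioc 0 T := Finset.Icc_add_one_left_eq_Ioc 0 T
  have hsum : (∑ t ∈ Finset.Ioc 0 T, m t) ^ 2
      ≤ (∑ i ∈ Finset.Icc 1 T, (a i ^ 2 + 2 * α * b i)) + 2 * M * (∑ t ∈ Finset.Ioc 0 T, m t) := by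
    rw [hsq T, hIcc]
    calc ∑ t ∈ Finset.Ioc 0 T, (m t ^ 2 + 2 * m t * ∑ i ∈ Finset.Ioc 0 (t - 1), m i)
        ≤ ∑ t ∈ Finset.Ioc 0 T, (a t ^ 2 + 2 * α * b t + 2 * M * m t) :=
          Finset.sum_le_sum hstep
      _ = (∑ i ∈ Finset.Ioc 0 T, (a i ^ 2 + 2 * α * b i)) + 2 * M * (∑ t ∈ Finset.Ioc 0 T, m t) := by
          rw [Finset.sum_add_distrib, Finset.mul_sum]
  set Q : ℝ := ∑ i ∈ Finset.Icc 1 T, (a i ^ 2 + 2 * α * b i) with hQ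
  have hsqrt : Real.sqrt Q ^ 2 = Q := Real.sq_sqrt hQ0
  have hfin : (∑ t ∈ Finset.Ioc 0 T, m t) ≤ 2 * M + Real.sqrt Q := by
    nlinarith [Real.sqrt_nonneg Q, hsum, hsqrt, hs0, hM0,
      mul_nonneg hM0 (Real.sqrt_nonneg Q)]
  linarith [hMkey]

/-- DUB-style tuning bound: if α λ_{t+1} dominates the delayed upper bound, then
∑_{t=1}^T min(b_t/λ_t, a_t) ≤ α λ_{T+D+1}. -/
theorem dub_tuning_bound (T D : ℕ) (α : ℝ) (hα : 0 < α) (a b lam : ℕ → ℝ)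
    (ha : ∀ t, 0 ≤ a t) (hb : ∀ t, 0 ≤ b t) (ha0 : a 0 = 0)
    (hlam : ∀ t, 0 < lam t)
    (hrec : ∀ t : ℕ,
      2 * (Finset.range (t - D - 1 + 1)).sup' ⟨0, Finset.mem_range.mpr (Nat.succ_pos _)⟩
            (fun j => ∑ i ∈ Finset.Icc (j + 1 - D) j, a i)
        + Real.sqrt (∑ i ∈ Finset.Icc 1 (t - D), (a i ^ 2 + 2 * α * b i))
        ≤ α * lam (t + 1)) :
    ∑ t ∈ Finset.Icc 1 T, min (b t / lam t) (a t) ≤ α * lam (T + D + 1) := by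
  rw [show Finset.Icc 1 T = Finset.Ioc 0 T from Finset.Icc_add_one_left_eq_Ioc 0 T]
  exact dub_aux D α hα a b lam ha hb ha0 hlam hrec T
end

section
/- Let H ∈ ℝ^{d×m}, ω ∈ Δ_{m-1}, v ∈ ℝ^d, ḡ ∈ ℝ^d, and q ∈ [1,∞) with conjugate p. If l(ω) = ‖ḡ‖_q · ‖Hω - v‖_q and Hω - v ≠ 0, then the vector γ = (‖ḡ‖_q / ‖Hω - v‖_q^{q-1}) · Hᵀ(|Hω - v|^{q-1} ⊙ sign(Hω - v)) is a subgradient of l at ω, and it satisfies ‖γ‖_∞ ≤ d^{1/q}·‖ḡ‖_q·max_{i,j}|H_{ij}|. -/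
open Finset

lemma my_holder {n : ℕ} (a b : Fin n → ℝ) (ha : ∀ i, 0 ≤ a i) (hb : ∀ i, 0 ≤ b i)
    {q : ℝ} (hq : 1 ≤ q) :
    ∑ i, a i ^ (q-1) * b i ≤ (∑ i, a i ^ q) ^ ((q-1)/q) * (∑ i, b i ^ q) ^ (1/q) := by
  rcases eq_or_lt_of_le hq with hq1 | hq1
  · simp [← hq1]
  · have hne : q - 1 ≠ 0 := (sub_pos.2 hq1).ne'
    have hpq : (q/(q-1)).HolderConjugate q := (Real.HolderConjugate.conjExponent hq1).symm
    have h := Real.inner_le_Lp_mul_Lq_of_nonneg (s := Finset.univ)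
      (f := fun i => a i ^ (q-1)) (g := b) hpq
      (fun i _ => Real.rpow_nonneg (ha i) _) (fun i _ => hb i)
    calc ∑ i, a i ^ (q-1) * b i
        ≤ (∑ i, (a i ^ (q-1)) ^ (q/(q-1))) ^ (1/(q/(q-1))) * (∑ i, b i ^ q) ^ (1/q) := h
      _ = (∑ i, a i ^ q) ^ ((q-1)/q) * (∑ i, b i ^ q) ^ (1/q) := by
          congr 1
          · congr 1
            · apply Finset.sum_congr rfl
              intro i _
              rw [← Real.rpow_mul (ha i)]
              congr 1
              rw [mul_div_assoc', mul_div_cancel_left₀ _ hne]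
            · rw [one_div_div]

lemma sign_mul_le_abs (y x : ℝ) : Real.sign y * x ≤ |x| := by
  rcases lt_trichotomy y 0 with h | h | h
  · rw [Real.sign_of_neg h, neg_one_mul]; exact neg_le_abs x
  · rw [h, Real.sign_zero, zero_mul]; exact abs_nonneg x
  · rw [Real.sign_of_pos h, one_mul]; exact le_abs_self x

lemma abs_sign_le_one (y : ℝ) : |Real.sign y| ≤ 1 := by
  rcases lt_trichotomy y 0 with h | h | h
  · simp [Real.sign_of_neg h]
  · simp [h]
  · simp [Real.sign_of_pos h]

lemma sgn_rpow_mul (y : ℝ) {q : ℝ} (hq : 1 ≤ q) :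
    |y| ^ (q-1) * Real.sign y * y = |y| ^ q := by
  have hq0 : q ≠ 0 := (lt_of_lt_of_le one_pos hq).ne'
  rcases lt_trichotomy y 0 with h | h | h
  · have h1 : 0 < |y| := abs_pos.2 h.ne
    rw [Real.sign_of_neg h,
      show |y| ^ (q-1) * (-1) * y = |y| ^ (q-1) * |y| ^ (1:ℝ) by
        rw [Real.rpow_one, abs_of_neg h]; ring,
      ← Real.rpow_add h1]
    norm_num
  · simp [h, Real.zero_rpow hq0]
  · have h1 : 0 < |y| := abs_pos.2 h.ne'
    rw [Real.sign_of_pos h,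
      show |y| ^ (q-1) * 1 * y = |y| ^ (q-1) * |y| ^ (1:ℝ) by
        rw [Real.rpow_one, abs_of_pos h]; ring,
      ← Real.rpow_add h1]
    norm_num

/-- Hinting loss subgradient and its ∞-norm bound: γ is a subgradient of
l(ω) = ‖ḡ‖_q ‖Hω - v‖_q at ω and ‖γ‖_∞ ≤ d^{1/q}‖ḡ‖_q max_{ij}|H_{ij}|. -/
theorem hinting_loss_subgradient (d m : ℕ) (H : Matrix (Fin (d+1)) (Fin (m+1)) ℝ)
    (ω : Fin (m+1) → ℝ) (hω_nonneg : ∀ j, 0 ≤ ω j) (hω_sum : ∑ j, ω j = 1)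
    (v gbar : Fin (d+1) → ℝ) (q : ℝ) (hq : 1 ≤ q)
    (hres : (fun i => (∑ j, H i j * ω j) - v i) ≠ (0 : Fin (d+1) → ℝ)) :
    let r : Fin (d+1) → ℝ := fun i => (∑ j, H i j * ω j) - v i
    let gq : ℝ := (∑ i, |gbar i| ^ q) ^ (1/q)
    let rq : ℝ := (∑ i, |r i| ^ q) ^ (1/q)
    let γ : Fin (m+1) → ℝ := fun k =>
      (gq / rq ^ (q - 1)) * ∑ i, H i k * (|r i| ^ (q - 1) * Real.sign (r i))
    (∀ u : Fin (m+1) → ℝ,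
        gq * (∑ i, |(∑ j, H i j * u j) - v i| ^ q) ^ (1/q)
          ≥ gq * rq + ∑ k, γ k * (u k - ω k)) ∧
    Finset.univ.sup' Finset.univ_nonempty (fun k => |γ k|)
      ≤ ((d + 1 : ℕ) : ℝ) ^ (1/q) * gq *
          Finset.univ.sup' Finset.univ_nonempty (fun ij : Fin (d+1) × Fin (m+1) => |H ij.1 ij.2|) := by
  intro r gq rq γ
  have hq0 : q ≠ 0 := (lt_of_lt_of_le one_pos hq).ne'
  set s : Fin (d+1) → ℝ := fun i => |r i| ^ (q-1) * Real.sign (r i) with hs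
  have hsum_pos : 0 < ∑ i, |r i| ^ q := by
    obtain ⟨i0, hi0⟩ : ∃ i, r i ≠ 0 := by
      by_contra h
      push_neg at h
      exact hres (funext fun i => h i)
    apply Finset.sum_pos' (fun i _ => Real.rpow_nonneg (abs_nonneg _) _)
    exact ⟨i0, Finset.mem_univ _, Real.rpow_pos_of_pos (abs_pos.2 hi0) q⟩
  have hrq : 0 < rq := Real.rpow_pos_of_pos hsum_pos _
  have hrq1 : 0 < rq ^ (q-1) := Real.rpow_pos_of_pos hrq _
  have hne' : rq ^ (q-1) ≠ 0 := hrq1.ne'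
  have hgq : 0 ≤ gq :=
    Real.rpow_nonneg (Finset.sum_nonneg fun i _ => Real.rpow_nonneg (abs_nonneg _) _) _
  have hc : 0 ≤ gq / rq ^ (q-1) := div_nonneg hgq hrq1.le
  have hrqdef : rq = (∑ i, |r i| ^ q) ^ (1/q) := rfl
  have hrqpow : (∑ i, |r i| ^ q) ^ ((q-1)/q) = rq ^ (q-1) := by
    rw [hrqdef, ← Real.rpow_mul hsum_pos.le]
    congr 1
    field_simp
  have hrqq : rq ^ q = ∑ i, |r i| ^ q := by
    rw [hrqdef, ← Real.rpow_mul hsum_pos.le, one_div_mul_cancel hq0, Real.rpow_one]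
  have hsr : ∑ i, s i * r i = rq ^ q := by
    rw [hrqq]
    exact Finset.sum_congr rfl fun i _ => sgn_rpow_mul (r i) hq
  have key : ∀ x : Fin (d+1) → ℝ,
      ∑ i, s i * x i ≤ rq ^ (q-1) * (∑ i, |x i| ^ q) ^ (1/q) := by
    intro x
    have h1 : ∑ i, s i * x i ≤ ∑ i, |r i| ^ (q-1) * |x i| := by
      refine Finset.sum_le_sum fun i _ => ?_
      rw [hs, mul_assoc]
      exact mul_le_mul_of_nonneg_left (sign_mul_le_abs _ _) (Real.rpow_nonneg (abs_nonneg _) _)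
    refine h1.trans ?_
    have h2 := my_holder (fun i => |r i|) (fun i => |x i|)
      (fun i => abs_nonneg _) (fun i => abs_nonneg _) hq
    rw [hrqpow] at h2
    exact h2
  constructor
  · intro u
    set x : Fin (d+1) → ℝ := fun i => (∑ j, H i j * u j) - v i with hx
    have hinner : ∀ i, ∑ k, H i k * (u k - ω k) = x i - r i := by
      intro i
      have : x i - r i = (∑ k, H i k * u k) - ∑ k, H i k * ω k := by
        show ((∑ j, H i j * u j) - v i) - ((∑ j, H i j * ω j) - v i) = _
        ring
      rw [this, ← Finset.sum_sub_distrib]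
      exact Finset.sum_congr rfl fun k _ => by ring
    have hγ : ∀ k, γ k = (gq / rq ^ (q-1)) * ∑ i, H i k * s i := fun k => rfl
    have hswap : ∑ k, γ k * (u k - ω k) = (gq / rq ^ (q-1)) * ∑ i, s i * (x i - r i) := by
      calc ∑ k, γ k * (u k - ω k)
          = ∑ k, ∑ i, (gq / rq ^ (q-1)) * (s i * (H i k * (u k - ω k))) := by
            refine Finset.sum_congr rfl fun k _ => ?_
            rw [hγ, Finset.mul_sum, Finset.sum_mul]
            exact Finset.sum_congr rfl fun i _ => by ring
        _ = ∑ i, ∑ k, (gq / rq ^ (q-1)) * (s i * (H i k * (u k - ω k))) := Finset.sum_comm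
        _ = (gq / rq ^ (q-1)) * ∑ i, s i * (x i - r i) := by
            rw [Finset.mul_sum]
            refine Finset.sum_congr rfl fun i _ => ?_
            rw [← Finset.mul_sum, ← Finset.mul_sum, hinner i]
    have e1 : ∑ i, s i * (x i - r i) = (∑ i, s i * x i) - ∑ i, s i * r i := by
      rw [← Finset.sum_sub_distrib]
      exact Finset.sum_congr rfl fun i _ => by ring
    have erq : rq ^ (q-1) * rq = rq ^ q := by
      have h5 := Real.rpow_add hrq (q-1) 1
      rw [Real.rpow_one] at h5
      rw [← h5]
      norm_num
    have h1 : (gq / rq ^ (q-1)) * ∑ i, s i * (x i - r i)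
        = (gq / rq ^ (q-1)) * (∑ i, s i * x i) - gq * rq := by
      rw [e1, hsr, mul_sub]
      congr 1
      rw [← erq]
      field_simp
    have h3 : (gq / rq ^ (q-1)) * (∑ i, s i * x i)
        ≤ (gq / rq ^ (q-1)) * (rq ^ (q-1) * (∑ i, |x i| ^ q) ^ (1/q)) :=
      mul_le_mul_of_nonneg_left (key x) hc
    have h4 : (gq / rq ^ (q-1)) * (rq ^ (q-1) * (∑ i, |x i| ^ q) ^ (1/q))
        = gq * (∑ i, |x i| ^ q) ^ (1/q) := by
      field_simp
    rw [h4] at h3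
    have h6 : gq * (∑ i, |x i| ^ q) ^ (1/q)
        = gq * (∑ i, |(∑ j, H i j * u j) - v i| ^ q) ^ (1/q) := rfl
    rw [hswap, h1]
    rw [← h6]
    linarith
  · apply Finset.sup'_le
    intro k _
    set M : ℝ := Finset.univ.sup' Finset.univ_nonempty
      (fun ij : Fin (d+1) × Fin (m+1) => |H ij.1 ij.2|) with hM
    have hMik : ∀ i, |H i k| ≤ M := by
      intro i
      rw [hM]
      exact Finset.le_sup' (fun ij : Fin (d+1) × Fin (m+1) => |H ij.1 ij.2|)
        (Finset.mem_univ (i,k))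
    have hM0 : 0 ≤ M := le_trans (abs_nonneg _) (hMik 0)
    have hγ : γ k = (gq / rq ^ (q-1)) * ∑ i, H i k * s i := rfl
    have h1 : |γ k| ≤ (gq / rq ^ (q-1)) * (M * ∑ i, |r i| ^ (q-1)) := by
      rw [hγ, abs_mul, abs_of_nonneg hc]
      apply mul_le_mul_of_nonneg_left _ hc
      refine (Finset.abs_sum_le_sum_abs _ _).trans ?_
      rw [Finset.mul_sum]
      refine Finset.sum_le_sum fun i _ => ?_
      rw [hs, abs_mul, abs_mul]
      have e1 : |(|r i| ^ (q-1))| = |r i| ^ (q-1) :=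
        abs_of_nonneg (Real.rpow_nonneg (abs_nonneg _) _)
      calc |H i k| * (|(|r i| ^ (q-1))| * |Real.sign (r i)|)
          ≤ M * (|r i| ^ (q-1) * 1) := by
            apply mul_le_mul (hMik i) _ (by positivity) hM0
            rw [e1]
            exact mul_le_mul_of_nonneg_left (abs_sign_le_one _)
              (Real.rpow_nonneg (abs_nonneg _) _)
        _ = M * |r i| ^ (q-1) := by ring
    have h2 : ∑ i, |r i| ^ (q-1) ≤ rq ^ (q-1) * ((d+1 : ℕ) : ℝ) ^ (1/q) := by
      have h3 := my_holder (fun i => |r i|) (fun _ => (1:ℝ))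
        (fun i => abs_nonneg _) (fun _ => zero_le_one) hq
      simp only [mul_one, Real.one_rpow, Finset.sum_const, Finset.card_univ,
        Fintype.card_fin, nsmul_eq_mul, mul_one] at h3
      rw [hrqpow] at h3
      exact h3
    calc |γ k| ≤ (gq / rq ^ (q-1)) * (M * ∑ i, |r i| ^ (q-1)) := h1
      _ ≤ (gq / rq ^ (q-1)) * (M * (rq ^ (q-1) * ((d+1 : ℕ) : ℝ) ^ (1/q))) :=
          mul_le_mul_of_nonneg_left (mul_le_mul_of_nonneg_left h2 hM0) hc
      _ = ((d+1 : ℕ) : ℝ) ^ (1/q) * gq * M := by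
          field_simp
end

section
/- Let g_1,…,g_T ∈ ℝ^d be loss subgradients and g̃_1,…,g̃_T hint vectors, and let huber(x,y) = (1/2)x² - (1/2)((x)-(y))_+² for nonnegative x, y. For each t, set c* = min(‖g_t‖_*/‖g̃_t - g_t‖_*, 1) (c* = 1 if g̃_t = g_t) and ĝ_t = g_t + c*·(g̃_t - g_t). Then (1/(2λ))‖g_t - ĝ_t‖_*² + (1/λ)‖g_t‖_*·‖ĝ_t - g̃_t‖_* = (1/λ)·huber(‖g_t - g̃_t‖_*, ‖g_t‖_*) for any λ > 0. -/
/-- Optimal-interpolation identity from the OFTRL regret analysis: with the optimal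
interpolated hint ĝ_t, the penalty equals (1/λ)·huber(‖g_t - g̃_t‖_*, ‖g_t‖_*). -/
theorem optimal_interpolation_huber (d T : ℕ) (N : (Fin d → ℝ) → ℝ)
    (hN_nonneg : ∀ v, 0 ≤ N v)
    (hN_homog : ∀ (a : ℝ) (v : Fin d → ℝ), N (a • v) = |a| * N v)
    (g gtil : Fin T → Fin d → ℝ) (lam : ℝ) (hlam : 0 < lam) :
    ∀ t : Fin T,
      let cstar : ℝ := if gtil t = g t then 1 else min (N (g t) / N (gtil t - g t)) 1
      let ghat : Fin d → ℝ := g t + cstar • (gtil t - g t)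
      (1 / (2 * lam)) * (N (g t - ghat))^2 + (1 / lam) * N (g t) * N (ghat - gtil t)
        = (1 / lam) * ((1/2) * (N (g t - gtil t))^2
            - (1/2) * (max (N (g t - gtil t) - N (g t)) 0)^2) := by
  intro t cstar ghat
  have hN0 : N (0 : Fin d → ℝ) = 0 := by
    have := hN_homog 0 0
    simpa using this
  set u : Fin d → ℝ := gtil t - g t with hu
  have hgdiff : g t - ghat = (-cstar) • u := by
    show g t - (g t + cstar • u) = (-cstar) • u
    funext i; simp [neg_smul]
  have hgdiff2 : ghat - gtil t = (cstar - 1) • u := by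
    show (g t + cstar • u) - gtil t = (cstar - 1) • u
    have : gtil t = g t + u := by funext i; simp [hu]
    rw [this]; funext i; simp [sub_smul]; ring
  have hgu : g t - gtil t = (-1 : ℝ) • u := by
    funext i; simp [hu]
  have h1 : N (g t - ghat) = |cstar| * N u := by rw [hgdiff, hN_homog, abs_neg]
  have h2 : N (ghat - gtil t) = |cstar - 1| * N u := by rw [hgdiff2, hN_homog]
  have h3 : N (g t - gtil t) = N u := by rw [hgu, hN_homog]; simp
  set a : ℝ := N u with ha'
  set b : ℝ := N (g t) with hb'
  have ha : 0 ≤ a := hN_nonneg u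
  have hb : 0 ≤ b := hN_nonneg _
  have hlam' : lam ≠ 0 := ne_of_gt hlam
  rw [h1, h2, h3]
  by_cases hz : gtil t = g t
  · have hu0 : u = 0 := by rw [hu, hz]; funext i; simp
    have ha0 : a = 0 := by rw [ha', hu0, hN0]
    have hc : cstar = 1 := by simp [cstar, hz]
    rw [ha0, hc]
    have : max (0 - b) 0 = 0 := by
      apply max_eq_right; linarith
    rw [this]; ring
  · have hc : cstar = min (b / a) 1 := by simp [cstar, hz]; rfl
    by_cases ha0 : a = 0
    · rw [ha0]
      have : max (0 - b) 0 = 0 := max_eq_right (by linarith)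
      rw [this]; ring
    · have hapos : 0 < a := lt_of_le_of_ne ha (Ne.symm ha0)
      by_cases hba : a ≤ b
      · have hc1 : cstar = 1 := by
          rw [hc]; apply min_eq_right
          rw [le_div_iff₀ hapos]; linarith
        rw [hc1]
        have : max (a - b) 0 = 0 := max_eq_right (by linarith)
        rw [this]
        simp only [abs_one, sub_self, abs_zero]
        field_simp; ring
      · push_neg at hba
        have hc1 : cstar = b / a := by
          rw [hc]; apply min_eq_left
          rw [div_le_one hapos]; linarith
        have hcnn : 0 ≤ cstar := by rw [hc1]; positivity
        have hcle : cstar ≤ 1 := by rw [hc1, div_le_one hapos]; linarith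
        rw [abs_of_nonneg hcnn, abs_of_nonpos (by linarith), hc1]
        have : max (a - b) 0 = a - b := max_eq_left (by linarith)
        rw [this]
        field_simp
        ring
end
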